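/- arXiv:2007.05568 — 3 statements merged into one kernel-verified Lean document; each statement's English description precedes it below -/
import Mathlib

section
/- The Bellman optimality operator T has a unique fixed point v* : S → ℝ, i.e., there exists exactly one function v* with (Tv*)(s) = v*(s) for all s ∈ S. -/
/-- If two functions differ pointwise by at most `C`, their `inf'`s differ by at most `C`. -/
lemma abs_inf'_sub_inf'_le {A : Type*} {t : Finset A} (ht : t.Nonempty)
    (f g : A → ℝ) (C : ℝ) (h : ∀ a ∈ t, |f a - g a| ≤ C) :
    |t.inf' ht f - t.inf' ht g| ≤ C := by
  rw [abs_sub_le_iff]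
  constructor
  · obtain ⟨a, ha, hag⟩ := t.exists_mem_eq_inf' ht g
    have h1 : t.inf' ht f ≤ f a := Finset.inf'_le _ ha
    have h2 := (abs_sub_le_iff.mp (h a ha)).1
    rw [hag]; linarith
  · obtain ⟨a, ha, haf⟩ := t.exists_mem_eq_inf' ht f
    have h1 : t.inf' ht g ≤ g a := Finset.inf'_le _ ha
    have h2 := (abs_sub_le_iff.mp (h a ha)).2
    rw [haf]; linarith

/-- The Bellman optimality operator `T` has a unique fixed point `v* : S → ℝ`. -/
theorem bellman_operator_unique_fixed_point
    {S A : Type*} [Fintype S] [Nonempty S] [Fintype A]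
    (𝒜 : S → Finset A) (h𝒜 : ∀ s, (𝒜 s).Nonempty)
    (c : S → A → ℝ) (P : S → A → S → ℝ)
    (hP0 : ∀ s a s', 0 ≤ P s a s')
    (hP1 : ∀ s, ∀ a ∈ 𝒜 s, ∑ s', P s a s' = 1)
    (lam : ℝ) (hlam0 : 0 ≤ lam) (hlam1 : lam < 1)
    (T : (S → ℝ) → (S → ℝ))
    (hT : ∀ v s, T v s =
      (𝒜 s).inf' (h𝒜 s) (fun a => c s a + lam * ∑ s', P s a s' * v s')) :
    ∃! vstar : S → ℝ, ∀ s, T vstar s = vstar s := by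
  have key : ∀ u v : (S → ℝ), dist (T u) (T v) ≤ lam * dist u v := by
    intro u v
    rw [dist_pi_le_iff (by positivity)]
    intro s
    rw [Real.dist_eq, hT, hT]
    apply abs_inf'_sub_inf'_le
    intro a ha
    have : (c s a + lam * ∑ s', P s a s' * u s') - (c s a + lam * ∑ s', P s a s' * v s')
        = lam * ∑ s', P s a s' * (u s' - v s') := by
      rw [Finset.mul_sum, Finset.mul_sum, Finset.mul_sum, add_sub_add_left_eq_sub,
        ← Finset.sum_sub_distrib]
      exact Finset.sum_congr rfl fun i _ => by ring
    rw [this, abs_mul, abs_of_nonneg hlam0]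
    apply mul_le_mul_of_nonneg_left _ hlam0
    calc |∑ s', P s a s' * (u s' - v s')| ≤ ∑ s', |P s a s' * (u s' - v s')| :=
          Finset.abs_sum_le_sum_abs _ _
      _ ≤ ∑ s', P s a s' * dist u v := by
          apply Finset.sum_le_sum
          intro i _
          rw [abs_mul, abs_of_nonneg (hP0 s a i)]
          exact mul_le_mul_of_nonneg_left
            (by rw [← Real.dist_eq]; exact dist_le_pi_dist u v i) (hP0 s a i)
      _ = dist u v := by rw [← Finset.sum_mul, hP1 s a ha, one_mul]
  have hlip : LipschitzWith ⟨lam, hlam0⟩ T := by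
    apply LipschitzWith.of_dist_le_mul
    intro u v
    exact key u v
  have hcon : ContractingWith ⟨lam, hlam0⟩ T := ⟨by exact_mod_cast hlam1, hlip⟩
  refine ⟨hcon.fixedPoint T, ?_, ?_⟩
  · intro s
    have := hcon.fixedPoint_isFixedPt
    rw [Function.IsFixedPt] at this
    exact congrFun this s
  · intro v hv
    exact hcon.fixedPoint_unique (funext hv)
end

section
/- The optimal value function is the unique optimal solution of the linear-programming formulation of the Bellman equation: for any strictly positive weight function γ : S → ℝ with γ(s) > 0 for all s, the function v* (the unique fixed point of T) maximizes Σ_{s∈S} γ(s) v(s) over the feasible set { v : S → ℝ | v(s) ≤ c(s,a) + λ Σ_{s'∈S} P(s,a)(s') v(s') for all s ∈ S, a ∈ A_s }, and every maximizer over this feasible set equals v*. -/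
/-- The optimal value function is the unique optimal solution of the LP formulation
of the Bellman equation: for any strictly positive weights `γ`, `v*` is feasible and
maximizes `Σ_s γ(s) v(s)` over the feasible set
`{ v | ∀ s, ∀ a ∈ A_s, v(s) ≤ c(s,a) + λ Σ_{s'} P(s,a)(s') v(s') }`,
and every maximizer over this feasible set equals `v*`. -/
theorem lp_formulation_unique_optimal_solution
    {S A : Type*} [Fintype S] [Nonempty S] [Fintype A]
    (𝒜 : S → Finset A) (h𝒜 : ∀ s, (𝒜 s).Nonempty)
    (c : S → A → ℝ) (P : S → A → S → ℝ)
    (hP0 : ∀ s a s', 0 ≤ P s a s')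
    (hP1 : ∀ s, ∀ a ∈ 𝒜 s, ∑ s', P s a s' = 1)
    (lam : ℝ) (hlam0 : 0 ≤ lam) (hlam1 : lam < 1)
    (T : (S → ℝ) → (S → ℝ))
    (hT : ∀ v s, T v s =
      (𝒜 s).inf' (h𝒜 s) (fun a => c s a + lam * ∑ s', P s a s' * v s'))
    (vstar : S → ℝ) (hfix : ∀ s, T vstar s = vstar s)
    (huniq : ∀ w : S → ℝ, (∀ s, T w s = w s) → w = vstar)
    (γ : S → ℝ) (hγ : ∀ s, 0 < γ s) :
    (∀ s, ∀ a ∈ 𝒜 s, vstar s ≤ c s a + lam * ∑ s', P s a s' * vstar s') ∧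
    (∀ v : S → ℝ, (∀ s, ∀ a ∈ 𝒜 s, v s ≤ c s a + lam * ∑ s', P s a s' * v s') →
        ∑ s, γ s * v s ≤ ∑ s, γ s * vstar s) ∧
    (∀ v : S → ℝ, (∀ s, ∀ a ∈ 𝒜 s, v s ≤ c s a + lam * ∑ s', P s a s' * v s') →
        ∑ s, γ s * v s = ∑ s, γ s * vstar s → v = vstar) := by
  -- key: any feasible v satisfies v ≤ vstar pointwise
  have key : ∀ v : S → ℝ,
      (∀ s, ∀ a ∈ 𝒜 s, v s ≤ c s a + lam * ∑ s', P s a s' * v s') →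
      ∀ s, v s ≤ vstar s := by
    intro v hv
    set M : ℝ := Finset.univ.sup' Finset.univ_nonempty (fun s => v s - vstar s) with hM
    have hle : ∀ s, v s - vstar s ≤ M := fun s =>
      Finset.le_sup' (fun s => v s - vstar s) (Finset.mem_univ s)
    obtain ⟨s0, -, hs0⟩ :=
      Finset.exists_mem_eq_sup' (Finset.univ_nonempty (α := S)) (fun s => v s - vstar s)
    have hMle : M ≤ lam * M := by
      have hbound : ∀ a ∈ 𝒜 s0,
          v s0 - lam * M ≤ c s0 a + lam * ∑ s', P s0 a s' * vstar s' := by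
        intro a ha
        have h1 : ∑ s', P s0 a s' * v s' ≤ ∑ s', P s0 a s' * (vstar s' + M) := by
          apply Finset.sum_le_sum
          intro s' _
          exact mul_le_mul_of_nonneg_left (by linarith [hle s']) (hP0 s0 a s')
        have h2 : ∑ s', P s0 a s' * (vstar s' + M)
            = (∑ s', P s0 a s' * vstar s') + M := by
          simp [mul_add, Finset.sum_add_distrib, ← Finset.sum_mul, hP1 s0 a ha]
        have h3 := hv s0 a ha
        have h4 : lam * ∑ s', P s0 a s' * v s' ≤
            lam * ((∑ s', P s0 a s' * vstar s') + M) := by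
          rw [← h2]; exact mul_le_mul_of_nonneg_left h1 hlam0
        nlinarith
      have hinf : v s0 - lam * M ≤ T vstar s0 := by
        rw [hT]
        exact Finset.le_inf' _ _ hbound
      rw [hfix s0] at hinf
      have : M = v s0 - vstar s0 := hs0
      linarith
    have hM0 : M ≤ 0 := by nlinarith
    intro s
    linarith [hle s]
  refine ⟨?_, ?_, ?_⟩
  · intro s a ha
    rw [← hfix s, hT]
    exact Finset.inf'_le _ ha
  · intro v hv
    exact Finset.sum_le_sum fun s _ =>
      mul_le_mul_of_nonneg_left (key v hv s) (hγ s).le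
  · intro v hv hsum
    funext s
    by_contra hne
    have hlt : v s < vstar s := lt_of_le_of_ne (key v hv s) hne
    have : ∑ s, γ s * v s < ∑ s, γ s * vstar s := by
      apply Finset.sum_lt_sum
      · exact fun i _ => mul_le_mul_of_nonneg_left (key v hv i) (hγ i).le
      · exact ⟨s, Finset.mem_univ s, by
          exact mul_lt_mul_of_pos_left hlt (hγ s)⟩
    linarith
end

section
/- There exists a stationary optimal policy: if π : S → A is a stationary policy such that for every s ∈ S the action π(s) attains the minimum defining (Tv*)(s), i.e., c(s,π(s)) + λ Σ_{s'∈S} P(s,π(s))(s') v*(s') = min_{a∈A_s} [ c(s,a) + λ Σ_{s'∈S} P(s,a)(s') v*(s') ], then the unique fixed point v_π of the policy evaluation operator T_π equals v*; moreover, since S and each A_s are finite and nonempty, such a policy π exists. -/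
/-- There exists a stationary optimal policy: a policy `π` choosing, for every state,
an action attaining the minimum defining `(T v*)(s)` exists (since `S` and each `A_s`
are finite and nonempty), and for any such policy `π`, the unique fixed point `v_π`
of the policy evaluation operator `T_π` equals `v*`. -/
theorem stationary_optimal_policy_exists
    {S A : Type*} [Fintype S] [Nonempty S] [Fintype A]
    (𝒜 : S → Finset A) (h𝒜 : ∀ s, (𝒜 s).Nonempty)
    (c : S → A → ℝ) (P : S → A → S → ℝ)
    (hP0 : ∀ s a s', 0 ≤ P s a s')
    (hP1 : ∀ s, ∀ a ∈ 𝒜 s, ∑ s', P s a s' = 1)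
    (lam : ℝ) (hlam0 : 0 ≤ lam) (hlam1 : lam < 1)
    (T : (S → ℝ) → (S → ℝ))
    (hT : ∀ v s, T v s =
      (𝒜 s).inf' (h𝒜 s) (fun a => c s a + lam * ∑ s', P s a s' * v s'))
    (vstar : S → ℝ) (hfix : ∀ s, T vstar s = vstar s)
    (huniq : ∀ w : S → ℝ, (∀ s, T w s = w s) → w = vstar) :
    (∃ π : S → A, (∀ s, π s ∈ 𝒜 s) ∧
        ∀ s, c s (π s) + lam * ∑ s', P s (π s) s' * vstar s' =
          (𝒜 s).inf' (h𝒜 s) (fun a => c s a + lam * ∑ s', P s a s' * vstar s')) ∧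
    (∀ π : S → A, (∀ s, π s ∈ 𝒜 s) →
      (∀ s, c s (π s) + lam * ∑ s', P s (π s) s' * vstar s' =
          (𝒜 s).inf' (h𝒜 s) (fun a => c s a + lam * ∑ s', P s a s' * vstar s')) →
      ∀ vπ : S → ℝ,
        (∀ s, c s (π s) + lam * ∑ s', P s (π s) s' * vπ s' = vπ s) →
        vπ = vstar) := by
  constructor
  · choose π hπ1 hπ2 using fun s =>
      Finset.exists_mem_eq_inf' (h𝒜 s) (fun a => c s a + lam * ∑ s', P s a s' * vstar s')
    exact ⟨π, hπ1, fun s => (hπ2 s).symm⟩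
  · intro π hmem hopt vπ hfixπ
    -- vstar is also a fixed point of T_π
    have hstar : ∀ s, c s (π s) + lam * ∑ s', P s (π s) s' * vstar s' = vstar s := by
      intro s
      rw [hopt s, ← hT vstar s, hfix s]
    -- the difference satisfies d s = lam * ∑ P * d
    set d : S → ℝ := fun s => vπ s - vstar s with hd
    have hdiff : ∀ s, d s = lam * ∑ s', P s (π s) s' * d s' := by
      intro s
      have h1 := hfixπ s
      have h2 := hstar s
      simp only [hd]
      have : ∑ s', P s (π s) s' * (vπ s' - vstar s')
          = (∑ s', P s (π s) s' * vπ s') - ∑ s', P s (π s) s' * vstar s' := by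
        rw [← Finset.sum_sub_distrib]
        congr 1; funext s'; ring
      rw [this]
      linarith [mul_sub lam (∑ s', P s (π s) s' * vπ s') (∑ s', P s (π s) s' * vstar s')]
    -- take the state maximizing |d|
    obtain ⟨s0, _, hs0⟩ := Finset.exists_mem_eq_sup' (Finset.univ_nonempty (α := S))
      (fun s => |d s|)
    set M := Finset.univ.sup' Finset.univ_nonempty (fun s => |d s|) with hM
    have hle : ∀ s, |d s| ≤ M := fun s =>
      Finset.le_sup' (fun s => |d s|) (Finset.mem_univ s)
    have hM0 : 0 ≤ M := le_trans (abs_nonneg _) (hle s0)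
    have key : M ≤ lam * M := by
      calc M = |d s0| := hs0
        _ = lam * |∑ s', P s0 (π s0) s' * d s'| := by
            rw [hdiff s0, abs_mul, abs_of_nonneg hlam0]
        _ ≤ lam * ∑ s', |P s0 (π s0) s' * d s'| := by
            exact mul_le_mul_of_nonneg_left (Finset.abs_sum_le_sum_abs _ _) hlam0
        _ ≤ lam * ∑ s', P s0 (π s0) s' * M := by
            refine mul_le_mul_of_nonneg_left (Finset.sum_le_sum fun s' _ => ?_) hlam0
            rw [abs_mul, abs_of_nonneg (hP0 s0 (π s0) s')]
            exact mul_le_mul_of_nonneg_left (hle s') (hP0 s0 (π s0) s')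
        _ = lam * M := by
            rw [← Finset.sum_mul, hP1 s0 (π s0) (hmem s0), one_mul]
    have hM0' : M ≤ 0 := by nlinarith
    funext s
    have : |d s| ≤ 0 := le_trans (hle s) hM0'
    have : d s = 0 := abs_nonpos_iff.mp this
    simpa [hd, sub_eq_zero] using this
end
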